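/- Every critical point of the Green's function g of the unbounded complementary component D of a compact non-polar set K ⊂ ℂ lies in the convex hull of K; consequently the set of singular values of g is bounded. -/

import Mathlib

open MeasureTheory Set Filter Topology
open scoped ENNReal

noncomputable def energy (μ : Measure ℂ) : EReal :=
  ((∫⁻ p : ℂ × ℂ, ENNReal.ofReal (Real.log (‖p.1 - p.2‖)) ∂(μ.prod μ) : ℝ≥0∞) : EReal)
  - ((∫⁻ p : ℂ × ℂ, (if p.1 = p.2 then (⊤ : ℝ≥0∞)
      else ENNReal.ofReal (-(Real.log (‖p.1 - p.2‖)))) ∂(μ.prod μ) : ℝ≥0∞) : EReal)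

noncomputable def expE (x : EReal) : ℝ := if x = ⊥ then 0 else Real.exp x.toReal

def suppIn (μ : Measure ℂ) (K : Set ℂ) : Prop := ∃ C : Set ℂ, IsCompact C ∧ C ⊆ K ∧ μ Cᶜ = 0

noncomputable def capacity (K : Set ℂ) : ℝ :=
  sSup {r : ℝ | ∃ μ : Measure ℂ, IsProbabilityMeasure μ ∧ suppIn μ K ∧ r = expE (energy μ)}

def IsPolar (E : Set ℂ) : Prop :=
  ∀ μ : Measure ℂ, IsProbabilityMeasure μ → suppIn μ E → energy μ = ⊥

noncomputable def lap (f : ℂ → ℝ) (z : ℂ) : ℝ :=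
  fderiv ℝ (fun w => fderiv ℝ f w 1) z 1 + fderiv ℝ (fun w => fderiv ℝ f w Complex.I) z Complex.I

def HarmonicOnD (f : ℂ → ℝ) (s : Set ℂ) : Prop :=
  ContDiffOn ℝ 2 f s ∧ ∀ z ∈ s, lap f z = 0

def SubharmonicOnD (f : ℂ → ℝ) (s : Set ℂ) : Prop :=
  UpperSemicontinuousOn f s ∧ ∀ z ∈ s, ∀ r : ℝ, 0 < r → Metric.closedBall z r ⊆ s →
    f z ≤ (1 / (2 * Real.pi)) * ∫ t in (0:ℝ)..(2 * Real.pi), f (z + r * Complex.exp (Complex.I * t))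

def finPart (D : Set (OnePoint ℂ)) : Set ℂ := {z : ℂ | (z : OnePoint ℂ) ∈ D}

def unbDom (K : Set ℂ) : Set (OnePoint ℂ) :=
  connectedComponentIn ((fun z : ℂ => (z : OnePoint ℂ)) '' K)ᶜ OnePoint.infty

def IsGreens (D : Set (OnePoint ℂ)) (g : ℂ → ℝ) : Prop :=
  (∀ z : ℂ, 0 ≤ g z) ∧
  SubharmonicOnD g Set.univ ∧
  HarmonicOnD g (finPart D) ∧
  (∃ M r : ℝ, ∀ z : ℂ, r ≤ ‖z‖ → |g z - Real.log (‖z‖)| ≤ M) ∧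
  (∀ r : ℝ, ∃ M : ℝ, ∀ z : ℂ, ‖z‖ ≤ r → |g z| ≤ M) ∧
  (∀ z : ℂ, z ∉ closure (finPart D) → g z = 0) ∧
  (∃ P : Set ℂ, IsPolar P ∧ ∀ ζ ∈ frontier (finPart D) \ P,
     Filter.Tendsto g (nhdsWithin ζ (finPart D)) (nhds 0))

noncomputable def gradC (g : ℂ → ℝ) (z : ℂ) : ℂ :=
  (fderiv ℝ g z 1 : ℝ) + (fderiv ℝ g z Complex.I : ℝ) * Complex.I

def FieldLine (g : ℂ → ℝ) (s : Set ℂ) (γ : ℝ → ℂ) (a b : ℝ) : Prop :=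
  ∀ t ∈ Set.Ioo a b, γ t ∈ s ∧ gradC g (γ t) ≠ 0 ∧
    HasDerivAt γ ((starRingEnd ℂ) (gradC g (γ t)) / ((‖gradC g (γ t)‖ : ℂ))^2) t ∧
    g (γ t) = t

noncomputable def Pc (K : Set ℂ) : Set ℂ :=
  K ∪ {z : ℂ | z ∉ K ∧ Bornology.IsBounded (connectedComponentIn Kᶜ z)}

namespace CPaux

noncomputable def kP : ℂ × ℂ → ℝ := fun p => Real.log (‖p.1 - p.2‖)

lemma kP_sm : StronglyMeasurable kP :=
  (Real.measurable_log.comp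
    (continuous_norm.comp (continuous_fst.sub continuous_snd)).measurable).stronglyMeasurable

lemma diag_meas : MeasurableSet {p : ℂ × ℂ | p.1 = p.2} :=
  isClosed_eq continuous_fst continuous_snd |>.measurableSet

lemma log_le_log' {x M : ℝ} (hx : 0 ≤ x) (hxM : x ≤ M) (hM : 1 ≤ M) :
    Real.log x ≤ Real.log M := by
  rcases le_or_gt x 1 with h | h
  · exact (Real.log_nonpos hx h).trans (Real.log_nonneg hM)
  · exact Real.log_le_log (by linarith) hxM

lemma prod_smul_left (c : ℝ≥0∞) (hc : c ≠ ⊤) (μ ν : Measure ℂ) [IsFiniteMeasure μ]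
    [IsFiniteMeasure ν] : (c • μ).prod ν = c • (μ.prod ν) := by
  haveI : IsFiniteMeasure (c • μ) :=
    ⟨by rw [Measure.smul_apply, smul_eq_mul]; exact ENNReal.mul_lt_top hc.lt_top (measure_lt_top μ _)⟩
  refine Measure.prod_eq fun s t hs ht => ?_
  rw [Measure.smul_apply, Measure.prod_prod, Measure.smul_apply, smul_eq_mul, smul_eq_mul, mul_assoc]

lemma prod_smul_right (c : ℝ≥0∞) (hc : c ≠ ⊤) (μ ν : Measure ℂ) [IsFiniteMeasure μ]
    [IsFiniteMeasure ν] : μ.prod (c • ν) = c • (μ.prod ν) := by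
  haveI : IsFiniteMeasure (c • ν) :=
    ⟨by rw [Measure.smul_apply, smul_eq_mul]; exact ENNReal.mul_lt_top hc.lt_top (measure_lt_top ν _)⟩
  refine Measure.prod_eq fun s t hs ht => ?_
  rw [Measure.smul_apply, Measure.prod_prod, Measure.smul_apply, smul_eq_mul, smul_eq_mul]
  ring

lemma energy_eq_integral (μ : Measure ℂ) [IsFiniteMeasure μ]
    (hdiag : (μ.prod μ) {p : ℂ × ℂ | p.1 = p.2} = 0) (hint : Integrable kP (μ.prod μ)) :
    energy μ = ((∫ p, kP p ∂(μ.prod μ) : ℝ) : EReal) := by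
  set m := μ.prod μ with hm
  have hNae : (fun p : ℂ × ℂ => if p.1 = p.2 then (⊤ : ℝ≥0∞)
      else ENNReal.ofReal (-(Real.log (‖p.1 - p.2‖))))
      =ᵐ[m] fun p => ENNReal.ofReal (- kP p) := by
    refine Filter.eventuallyEq_of_mem (?_ : {p : ℂ × ℂ | p.1 ≠ p.2} ∈ ae m) ?_
    · rw [mem_ae_iff]
      convert hdiag using 2
      ext p
      simp
    · intro p hp
      simp only [Set.mem_setOf_eq] at hp
      simp [kP, if_neg hp]
  have hNeq : (∫⁻ p : ℂ × ℂ, (if p.1 = p.2 then (⊤ : ℝ≥0∞)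
      else ENNReal.ofReal (-(Real.log (‖p.1 - p.2‖)))) ∂m)
      = ∫⁻ p, ENNReal.ofReal (- kP p) ∂m := lintegral_congr_ae hNae
  have henorm : ∀ x : ℝ, ENNReal.ofReal x ≤ (‖x‖₊ : ℝ≥0∞) := by
    intro x
    rw [← enorm_eq_nnnorm, Real.enorm_eq_ofReal_abs]
    exact ENNReal.ofReal_le_ofReal (le_abs_self x)
  have hfin : (∫⁻ p, (‖kP p‖₊ : ℝ≥0∞) ∂m) < ⊤ := hint.2
  have hPfin : (∫⁻ p : ℂ × ℂ, ENNReal.ofReal (Real.log (‖p.1 - p.2‖)) ∂m) ≠ ⊤ := by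
    refine (lt_of_le_of_lt (lintegral_mono fun p => ?_) hfin).ne
    exact henorm _
  have hNfin : (∫⁻ p : ℂ × ℂ, (if p.1 = p.2 then (⊤ : ℝ≥0∞)
      else ENNReal.ofReal (-(Real.log (‖p.1 - p.2‖)))) ∂m) ≠ ⊤ := by
    rw [hNeq]
    refine (lt_of_le_of_lt (lintegral_mono fun p => ?_) hfin).ne
    calc ENNReal.ofReal (- kP p) ≤ (‖- kP p‖₊ : ℝ≥0∞) := henorm _
    _ = (‖kP p‖₊ : ℝ≥0∞) := by rw [nnnorm_neg]
  have hval := integral_eq_lintegral_pos_part_sub_lintegral_neg_part hint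
  rw [energy, ← hm, hNeq, hval]
  have h1 : ((∫⁻ p : ℂ × ℂ, ENNReal.ofReal (Real.log (‖p.1 - p.2‖)) ∂m : ℝ≥0∞) : EReal)
      = (((∫⁻ p : ℂ × ℂ, ENNReal.ofReal (Real.log (‖p.1 - p.2‖)) ∂m).toReal : ℝ) : EReal) := by
    rw [← ENNReal.ofReal_toReal hPfin, EReal.coe_ennreal_ofReal,
      max_eq_left ENNReal.toReal_nonneg, ENNReal.ofReal_toReal hPfin]
  have hNfin' : (∫⁻ p, ENNReal.ofReal (- kP p) ∂m) ≠ ⊤ := hNeq ▸ hNfin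
  have h2 : ((∫⁻ p, ENNReal.ofReal (- kP p) ∂m : ℝ≥0∞) : EReal)
      = (((∫⁻ p, ENNReal.ofReal (- kP p) ∂m).toReal : ℝ) : EReal) := by
    rw [← ENNReal.ofReal_toReal hNfin', EReal.coe_ennreal_ofReal,
      max_eq_left ENNReal.toReal_nonneg, ENNReal.ofReal_toReal hNfin']
  rw [h1, h2, ← EReal.coe_sub]
  rfl


section basics
variable {K : Set ℂ} {ω : Measure ℂ}

lemma haeK (hsupp : ω Kᶜ = 0) : ∀ᵐ u ∂ω, u ∈ K := by
  rw [ae_iff]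
  exact hsupp

lemma haeKK [SFinite ω] (hsupp : ω Kᶜ = 0) : ∀ᵐ p ∂(ω.prod ω), p.1 ∈ K ∧ p.2 ∈ K := by
  have h1 : ∀ᵐ p ∂(ω.prod ω), p.1 ∈ K := by
    rw [ae_iff]
    refine measure_mono_null (fun p hp => ?_) (?_ : ω.prod ω (Kᶜ ×ˢ univ) = 0)
    · simp only [Set.mem_setOf_eq] at hp
      exact ⟨hp, mem_univ _⟩
    · rw [Measure.prod_prod, hsupp, zero_mul]
  have h2 : ∀ᵐ p ∂(ω.prod ω), p.2 ∈ K := by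
    rw [ae_iff]
    refine measure_mono_null (fun p hp => ?_) (?_ : ω.prod ω (univ ×ˢ Kᶜ) = 0)
    · exact ⟨mem_univ _, hp⟩
    · rw [Measure.prod_prod, hsupp, mul_zero]
  exact h1.and h2

lemma Nfin [SFinite ω] (hnp : energy ω ≠ ⊥) :
    (∫⁻ p : ℂ × ℂ, (if p.1 = p.2 then (⊤ : ℝ≥0∞)
      else ENNReal.ofReal (-(Real.log (‖p.1 - p.2‖)))) ∂(ω.prod ω)) ≠ ⊤ := by
  intro h
  apply hnp
  rw [energy, h]
  simp [EReal.sub_top]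

lemma diag0 [SFinite ω] (hnp : energy ω ≠ ⊥) : (ω.prod ω) {p : ℂ × ℂ | p.1 = p.2} = 0 := by
  by_contra h
  apply Nfin hnp
  have hd : MeasurableSet {p : ℂ × ℂ | p.1 = p.2} :=
    (isClosed_eq continuous_fst continuous_snd).measurableSet
  have : (⊤ : ℝ≥0∞) * (ω.prod ω) {p : ℂ × ℂ | p.1 = p.2}
      ≤ ∫⁻ p : ℂ × ℂ, (if p.1 = p.2 then (⊤ : ℝ≥0∞)
      else ENNReal.ofReal (-(Real.log (‖p.1 - p.2‖)))) ∂(ω.prod ω) := by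
    rw [← lintegral_indicator_const hd]
    refine lintegral_mono fun p => ?_
    rw [Set.indicator_apply]
    by_cases hp : p.1 = p.2
    · simp [hp]
    · simp [hp]
  rw [ENNReal.top_mul h] at this
  exact top_le_iff.mp this

lemma Pfin [IsFiniteMeasure ω] (hK : IsCompact K) (hsupp : ω Kᶜ = 0) :
    (∫⁻ p : ℂ × ℂ, ENNReal.ofReal (Real.log (‖p.1 - p.2‖)) ∂(ω.prod ω)) ≠ ⊤ := by
  obtain ⟨R, hR⟩ := hK.isBounded.subset_closedBall 0
  have hbound : ∀ᵐ p ∂(ω.prod ω),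
      ENNReal.ofReal (Real.log (‖p.1 - p.2‖))
        ≤ ENNReal.ofReal (Real.log (2 * |R| + 1)) := by
    filter_upwards [haeKK hsupp] with p hp
    refine ENNReal.ofReal_le_ofReal (log_le_log' (norm_nonneg _) ?_ (by linarith [abs_nonneg R]))
    have h1 : ‖p.1‖ ≤ |R| := by
      have := hR hp.1
      rw [Metric.mem_closedBall, dist_zero_right] at this
      exact this.trans (le_abs_self R)
    have h2 : ‖p.2‖ ≤ |R| := by
      have := hR hp.2
      rw [Metric.mem_closedBall, dist_zero_right] at this
      exact this.trans (le_abs_self R)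
    calc ‖p.1 - p.2‖ = ‖p.1 - p.2‖ := rfl
    _ ≤ ‖p.1‖ + ‖p.2‖ := norm_sub_le _ _
    _ ≤ 2 * |R| + 1 := by linarith
  refine (lt_of_le_of_lt (lintegral_mono_ae hbound) ?_).ne
  rw [lintegral_const]
  exact ENNReal.mul_lt_top ENNReal.ofReal_lt_top (measure_lt_top _ _)

lemma kint [IsFiniteMeasure ω] (hK : IsCompact K) (hsupp : ω Kᶜ = 0) (hnp : energy ω ≠ ⊥) :
    Integrable kP (ω.prod ω) := by
  refine ⟨kP_sm.aestronglyMeasurable, ?_⟩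
  have hptwise : ∀ p : ℂ × ℂ, (‖kP p‖₊ : ℝ≥0∞)
      ≤ ENNReal.ofReal (kP p) + ENNReal.ofReal (- kP p) := by
    intro p
    rw [← enorm_eq_nnnorm, Real.enorm_eq_ofReal_abs]
    rcases le_total 0 (kP p) with h | h
    · rw [abs_of_nonneg h]
      exact le_add_of_le_of_nonneg (le_refl _) zero_le
    · rw [abs_of_nonpos h]
      exact le_add_of_nonneg_of_le zero_le (le_refl _)
  have hmono : ∀ᵐ p ∂(ω.prod ω), ENNReal.ofReal (- kP p)
      ≤ (if p.1 = p.2 then (⊤ : ℝ≥0∞)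
        else ENNReal.ofReal (-(Real.log (‖p.1 - p.2‖)))) := by
    filter_upwards with p
    by_cases hp : p.1 = p.2
    · rw [if_pos hp]; exact le_top
    · rw [if_neg hp]
      exact le_rfl
  rw [HasFiniteIntegral]
  calc ∫⁻ p, (‖kP p‖₊ : ℝ≥0∞) ∂(ω.prod ω)
      ≤ ∫⁻ p, (ENNReal.ofReal (kP p) + ENNReal.ofReal (- kP p)) ∂(ω.prod ω) :=
        lintegral_mono hptwise
    _ = (∫⁻ p, ENNReal.ofReal (kP p) ∂(ω.prod ω))
        + ∫⁻ p, ENNReal.ofReal (- kP p) ∂(ω.prod ω) := by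
        refine lintegral_add_left ?_ _
        exact ENNReal.measurable_ofReal.comp kP_sm.measurable
    _ ≤ (∫⁻ p : ℂ × ℂ, ENNReal.ofReal (Real.log (‖p.1 - p.2‖)) ∂(ω.prod ω))
        + ∫⁻ p : ℂ × ℂ, (if p.1 = p.2 then (⊤ : ℝ≥0∞)
          else ENNReal.ofReal (-(Real.log (‖p.1 - p.2‖)))) ∂(ω.prod ω) :=
        add_le_add (le_refl _) (lintegral_mono_ae hmono)
    _ < ⊤ := by
        rw [ENNReal.add_lt_top]
        exact ⟨(Pfin hK hsupp).lt_top, (Nfin hnp).lt_top⟩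

lemma noatom [SFinite ω] (hnp : energy ω ≠ ⊥) : ∀ x : ℂ, ω {x} = 0 := by
  intro x
  have h : (ω.prod ω) ({x} ×ˢ {x}) = 0 := by
    refine measure_mono_null (fun p hp => ?_) (diag0 hnp)
    obtain ⟨h1, h2⟩ := hp
    simp only [Set.mem_singleton_iff] at h1 h2
    simp [Set.mem_setOf_eq, h1, h2]
  rw [Measure.prod_prod] at h
  rcases mul_eq_zero.mp h with h | h <;> exact h

lemma integrable_slice [IsProbabilityMeasure ω] (hK : IsCompact K) (hsupp : ω Kᶜ = 0)
    {c : ℂ} (hc : c ∉ K) (hKne : K.Nonempty) :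
    Integrable (fun u => Real.log (‖c - u‖)) ω := by
  obtain ⟨R, hR⟩ := hK.isBounded.subset_closedBall 0
  set ρ := Metric.infDist c K with hρdef
  have hρ : 0 < ρ := (hK.isClosed.notMem_iff_infDist_pos hKne).1 hc
  set M := ‖c‖ + |R| + 1 with hM
  refine Integrable.mono' (integrable_const (|Real.log ρ| + |Real.log M|))
    ((Real.measurable_log.comp
      (continuous_norm.comp (continuous_const.sub continuous_id)).measurable).aestronglyMeasurable)
    ?_
  filter_upwards [haeK hsupp] with u hu
  have h1 : ρ ≤ ‖c - u‖ := by
    have := Metric.infDist_le_dist_of_mem (x := c) hu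
    rwa [Complex.dist_eq] at this
  have h2 : ‖c - u‖ ≤ M := by
    have hu' : ‖u‖ ≤ |R| := by
      have := hR hu
      rw [Metric.mem_closedBall, dist_zero_right] at this
      exact this.trans (le_abs_self R)
    calc ‖c - u‖ = ‖c - u‖ := rfl
    _ ≤ ‖c‖ + ‖u‖ := norm_sub_le _ _
    _ ≤ M := by linarith
  rw [Real.norm_eq_abs]
  rcases le_total (‖c - u‖) 1 with h | h
  · have hlog : Real.log (‖c - u‖) ≤ 0 := Real.log_nonpos (norm_nonneg _) h
    have hlb : Real.log ρ ≤ Real.log (‖c - u‖) := Real.log_le_log hρ h1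
    rw [abs_of_nonpos hlog]
    have : -Real.log (‖c - u‖) ≤ -Real.log ρ := by linarith
    exact this.trans ((neg_le_abs _).trans (by linarith [abs_nonneg (Real.log M)]))
  · have hlog : 0 ≤ Real.log (‖c - u‖) := Real.log_nonneg h
    rw [abs_of_nonneg hlog]
    have : Real.log (‖c - u‖) ≤ Real.log M := Real.log_le_log (by linarith) h2
    exact this.trans ((le_abs_self _).trans (by linarith [abs_nonneg (Real.log ρ)]))

end basics

lemma isCompact_hull {K : Set ℂ} (hK : IsCompact K) : IsCompact (convexHull ℝ K) := by
  classical
  have himage : convexHull ℝ K =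
      (fun q : (Fin 3 → ℝ) × (Fin 3 → ℂ) => ∑ i, q.1 i • q.2 i) ''
        (stdSimplex ℝ (Fin 3) ×ˢ Set.univ.pi fun _ : Fin 3 => K) := by
    apply Subset.antisymm
    · intro x hx
      obtain ⟨ι, hι, z, w, hzK, hAI, hwpos, hwsum, hx⟩ :=
        eq_pos_convex_span_of_mem_convexHull hx
      have hcard : Fintype.card ι ≤ 3 := by
        calc Fintype.card ι ≤ Module.finrank ℝ (vectorSpan ℝ (Set.range z)) + 1 :=
              hAI.card_le_finrank_succ
        _ ≤ Module.finrank ℝ ℂ + 1 := by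
              have := Submodule.finrank_le (vectorSpan ℝ (Set.range z))
              omega
        _ = 3 := by rw [Complex.finrank_real_complex]
      have hne : Nonempty ι := by
        by_contra hemp
        rw [not_nonempty_iff] at hemp
        rw [Finset.univ_eq_empty, Finset.sum_empty] at hwsum
        norm_num at hwsum
      obtain ⟨i₀⟩ := hne
      set m := Fintype.card ι with hm
      let e := Fintype.equivFin ι
      have hsum3 : ∀ {M : Type} [AddCommMonoid M] (f : ι → M),
          (∑ j : Fin 3, (if h : (j : ℕ) < m then f (e.symm ⟨j, h⟩) else 0)) = ∑ i, f i := by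
        intro M _ f
        rw [Fin.sum_univ_eq_sum_range (fun j => if h : j < m then f (e.symm ⟨j, h⟩) else 0) 3]
        rw [← Finset.sum_subset (Finset.range_subset_range.2 hcard) (by
          intro j _ hj
          rw [Finset.mem_range] at hj
          exact dif_neg hj)]
        rw [← Fin.sum_univ_eq_sum_range (fun j => if h : j < m then f (e.symm ⟨j, h⟩) else 0) m]
        rw [Finset.sum_congr rfl (fun j _ => dif_pos j.2)]
        simp only [Fin.eta]
        exact Equiv.sum_comp e.symm f
      refine ⟨⟨fun j => if h : (j : ℕ) < m then w (e.symm ⟨j, h⟩) else 0,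
              fun j => if h : (j : ℕ) < m then z (e.symm ⟨j, h⟩) else z i₀⟩,
              ⟨⟨fun j => ?_, ?_⟩, fun j _ => ?_⟩, ?_⟩
      · dsimp only
        split
        · exact (hwpos _).le
        · exact le_refl 0
      · dsimp only
        rw [hsum3 w, hwsum]
      · dsimp only
        split
        · exact hzK (Set.mem_range_self _)
        · exact hzK (Set.mem_range_self _)
      · dsimp only
        rw [← hx, ← hsum3 (fun i => w i • z i)]
        refine Finset.sum_congr rfl (fun j _ => ?_)
        by_cases h : (j : ℕ) < m
        · rw [dif_pos h, dif_pos h, dif_pos h]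
        · rw [dif_neg h, dif_neg h, zero_smul]
          rw [dif_neg h]
    · rintro x ⟨⟨ws, zs⟩, ⟨hws, hzs⟩, rfl⟩
      exact (convex_convexHull ℝ K).sum_mem (fun i _ => hws.1 i) hws.2
        (fun i _ => subset_convexHull ℝ K (hzs i (Set.mem_univ i)))
  rw [himage]
  refine (((isCompact_stdSimplex ℝ (Fin 3)).prod (isCompact_univ_pi fun _ => hK))).image ?_
  exact continuous_finset_sum _ fun i _ =>
    ((continuous_apply i).comp continuous_fst).smul ((continuous_apply i).comp continuous_snd)


noncomputable def dlog (u z : ℂ) : ℂ →L[ℝ] ℝ :=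
  (Complex.normSq (z - u))⁻¹ • ((z - u).re • Complex.reCLM + (z - u).im • Complex.imCLM)

lemma dlog_apply (u z v : ℂ) :
    dlog u z v = (Complex.normSq (z - u))⁻¹ * ((z - u).re * v.re + (z - u).im * v.im) := by
  simp [dlog, ContinuousLinearMap.smul_apply, ContinuousLinearMap.add_apply]
  ring

lemma hasFDerivAt_logabs (u z : ℂ) (hz : z ≠ u) :
    HasFDerivAt (fun z => Real.log (‖z - u‖)) (dlog u z) z := by
  have hfun : (fun z : ℂ => Real.log (‖z - u‖))
      = fun z : ℂ => (2⁻¹ : ℝ) * Real.log (Complex.normSq (z - u)) := by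
    funext y
    rw [Complex.norm_def, Real.log_sqrt (Complex.normSq_nonneg _)]
    ring
  rw [hfun]
  have hsub : HasFDerivAt (fun y : ℂ => y - u) (ContinuousLinearMap.id ℝ ℂ) z :=
    (hasFDerivAt_id z).sub_const u
  have hnsqfun : (Complex.normSq : ℂ → ℝ)
      = fun y => (Complex.reCLM y) * (Complex.reCLM y) + (Complex.imCLM y) * (Complex.imCLM y) := by
    funext y; simp [Complex.normSq_apply]
  have hnsq : HasFDerivAt Complex.normSq
      ((Complex.reCLM (z - u) : ℝ) • (Complex.reCLM : ℂ →L[ℝ] ℝ)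
        + (Complex.reCLM (z - u) : ℝ) • (Complex.reCLM : ℂ →L[ℝ] ℝ)
        + ((Complex.imCLM (z - u) : ℝ) • (Complex.imCLM : ℂ →L[ℝ] ℝ)
        + (Complex.imCLM (z - u) : ℝ) • (Complex.imCLM : ℂ →L[ℝ] ℝ))) (z - u) := by
    rw [hnsqfun]
    exact ((Complex.reCLM.hasFDerivAt).mul (Complex.reCLM.hasFDerivAt)).add
      ((Complex.imCLM.hasFDerivAt).mul (Complex.imCLM.hasFDerivAt))
  have hcomp : HasFDerivAt (fun y : ℂ => Complex.normSq (y - u))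
      (((Complex.reCLM (z - u) : ℝ) • (Complex.reCLM : ℂ →L[ℝ] ℝ)
        + (Complex.reCLM (z - u) : ℝ) • (Complex.reCLM : ℂ →L[ℝ] ℝ)
        + ((Complex.imCLM (z - u) : ℝ) • (Complex.imCLM : ℂ →L[ℝ] ℝ)
        + (Complex.imCLM (z - u) : ℝ) • (Complex.imCLM : ℂ →L[ℝ] ℝ))).comp
        (ContinuousLinearMap.id ℝ ℂ)) z := hnsq.comp z hsub
  have hne : Complex.normSq (z - u) ≠ 0 :=
    (Complex.normSq_pos.2 (sub_ne_zero.2 hz)).ne'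
  have hlog := (Real.hasDerivAt_log hne).comp_hasFDerivAt z hcomp
  have hfinal := hlog.const_mul (2⁻¹ : ℝ)
  refine hfinal.congr_fderiv ?_
  apply ContinuousLinearMap.ext
  intro v
  simp only [dlog, ContinuousLinearMap.smul_apply, ContinuousLinearMap.add_apply,
    ContinuousLinearMap.coe_comp', Function.comp_apply, ContinuousLinearMap.coe_id', id_eq,
    Complex.reCLM_apply, Complex.imCLM_apply, smul_eq_mul]
  ring

lemma dlog_norm_le (u z : ℂ) (hz : z ≠ u) :
    ‖dlog u z‖ ≤ 2 / ‖z - u‖ := by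
  have habs : 0 < ‖z - u‖ := by
    exact norm_pos_iff.2 (sub_ne_zero.2 hz)
  refine ContinuousLinearMap.opNorm_le_bound _ (by positivity) (fun v => ?_)
  rw [dlog_apply]
  have h1 : |(z - u).re * v.re + (z - u).im * v.im|
      ≤ ‖z - u‖ * ‖v‖ + ‖z - u‖ * ‖v‖ := by
    refine (abs_add_le _ _).trans (add_le_add ?_ ?_)
    · rw [abs_mul]
      exact mul_le_mul (Complex.abs_re_le_norm _) ((Complex.abs_re_le_norm v).trans
        (le_of_eq rfl)) (abs_nonneg _) (norm_nonneg _)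
    · rw [abs_mul]
      exact mul_le_mul (Complex.abs_im_le_norm _) ((Complex.abs_im_le_norm v).trans
        (le_of_eq rfl)) (abs_nonneg _) (norm_nonneg _)
  have hnsq : Complex.normSq (z - u) = (‖z - u‖)^2 := (Complex.sq_norm _).symm
  rw [Real.norm_eq_abs, abs_mul, abs_inv, hnsq]
  have : |(‖z - u‖)^2| = (‖z - u‖)^2 := abs_of_nonneg (by positivity)
  rw [this]
  calc ((‖z - u‖)^2)⁻¹ * |(z - u).re * v.re + (z - u).im * v.im|
      ≤ ((‖z - u‖)^2)⁻¹ * (2 * (‖z - u‖ * ‖v‖)) := by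
        refine mul_le_mul_of_nonneg_left ?_ (by positivity)
        linarith
    _ = 2 / ‖z - u‖ * ‖v‖ := by
        field_simp


lemma dlog_aesm {ω : Measure ℂ} (c : ℂ) : AEStronglyMeasurable (fun w => dlog w c) ω := by
  have h1 : Measurable fun w : ℂ => (Complex.normSq (c - w))⁻¹ * (c - w).re :=
    (((Complex.continuous_normSq.measurable).comp (measurable_const.sub measurable_id)).inv).mul
      ((Complex.measurable_re).comp (measurable_const.sub measurable_id))
  have h2 : Measurable fun w : ℂ => (Complex.normSq (c - w))⁻¹ * (c - w).im :=
    (((Complex.continuous_normSq.measurable).comp (measurable_const.sub measurable_id)).inv).mul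
      ((Complex.measurable_im).comp (measurable_const.sub measurable_id))
  have : (fun w => dlog w c) = fun w =>
      ((Complex.normSq (c - w))⁻¹ * (c - w).re) • (Complex.reCLM : ℂ →L[ℝ] ℝ)
      + ((Complex.normSq (c - w))⁻¹ * (c - w).im) • (Complex.imCLM : ℂ →L[ℝ] ℝ) := by
    funext w
    rw [dlog]
    rw [smul_add, smul_smul, smul_smul]
  rw [this]
  exact ((h1.stronglyMeasurable.smul_const _).add
    (h2.stronglyMeasurable.smul_const _)).aestronglyMeasurable

lemma crit_mem_hull (K : Set ℂ) (hK : IsCompact K) (hKne : K.Nonempty) (ω : Measure ℂ)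
    [IsProbabilityMeasure ω] (hsupp : ω Kᶜ = 0) (CI : ℝ) (g : ℂ → ℝ)
    (hg : ∀ z, g z = (∫ w, Real.log (‖z - w‖) ∂ω) - CI)
    {c : ℂ} (hcK : c ∉ K) (hcrit : fderiv ℝ g c = 0) : c ∈ convexHull ℝ K := by
  by_contra hc
  obtain ⟨f, u, hfc, hfb⟩ :=
    geometric_hahn_banach_point_closed (convex_convexHull ℝ K) (isCompact_hull hK).isClosed hc
  set ρ := Metric.infDist c K with hρdef
  have hρ : 0 < ρ := (hK.isClosed.notMem_iff_infDist_pos hKne).1 hcK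
  obtain ⟨R, hR⟩ := hK.isBounded.subset_closedBall 0
  set M := ‖c‖ + |R| + 1 with hMdef
  have hM : 0 < M := by positivity
  have habsM : ∀ w ∈ K, ‖c - w‖ ≤ M := by
    intro w hw
    have hw' : ‖w‖ ≤ |R| := by
      have := hR hw
      rw [Metric.mem_closedBall, dist_zero_right] at this
      exact this.trans (le_abs_self R)
    calc ‖c - w‖ = ‖c - w‖ := rfl
    _ ≤ ‖c‖ + ‖w‖ := norm_sub_le _ _
    _ ≤ M := by linarith
  have hfar : ∀ w ∈ K, ρ ≤ ‖c - w‖ := by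
    intro w hw
    have := Metric.infDist_le_dist_of_mem (x := c) hw
    rwa [Complex.dist_eq] at this
  -- differentiation under the integral sign
  have hp : HasFDerivAt (fun z => ∫ w, Real.log (‖z - w‖) ∂ω)
      (∫ w, dlog w c ∂ω) c := by
    refine hasFDerivAt_integral_of_dominated_of_fderiv_le (s := Metric.ball c (ρ / 2))
      (bound := fun _ => 4 / ρ) (F' := fun z w => dlog w z) (Metric.ball_mem_nhds c (by linarith)) ?_ ?_ ?_ ?_ ?_ ?_
    · refine Filter.Eventually.of_forall fun x => ?_
      exact (Real.measurable_log.comp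
        (continuous_norm.comp (continuous_const.sub continuous_id)).measurable).aestronglyMeasurable
    · exact integrable_slice hK hsupp hcK hKne
    · exact dlog_aesm c
    · filter_upwards [haeK hsupp] with w hw
      intro x hx
      have hxw : ρ / 2 ≤ ‖x - w‖ := by
        have h1 := hfar w hw
        have h2 : ‖x - c‖ < ρ / 2 := by
          rw [Metric.mem_ball, Complex.dist_eq] at hx
          exact hx
        have : ‖c - w‖ ≤ ‖c - x‖ + ‖x - w‖ := by
          have := norm_add_le (c - x) (x - w)
          simpa using this
        rw [norm_sub_rev c x] at this
        linarith
      have hxw0 : x ≠ w := by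
        intro h
        rw [h, sub_self] at hxw
        simp at hxw
        linarith
      refine (dlog_norm_le w x hxw0).trans ?_
      rw [div_le_div_iff₀ (by linarith) hρ]
      nlinarith
    · exact integrable_const _
    · filter_upwards [haeK hsupp] with w hw
      intro x hx
      have hxw0 : x ≠ w := by
        intro h
        have h1 := hfar w hw
        have h2 : ‖x - c‖ < ρ / 2 := by
          rw [Metric.mem_ball, Complex.dist_eq] at hx
          exact hx
        rw [h] at h2
        rw [norm_sub_rev w c] at h2
        linarith
      exact hasFDerivAt_logabs w x hxw0
  have hgfun : g = fun z => (∫ w, Real.log (‖z - w‖) ∂ω) - CI := funext hg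
  have hDg : HasFDerivAt g (∫ w, dlog w c ∂ω) c := by
    rw [hgfun]; exact hp.sub_const CI
  have hD0 : (∫ w, dlog w c ∂ω) = 0 := by
    rw [← hDg.fderiv, hcrit]
  have hDint : Integrable (fun w => dlog w c) ω := by
    refine Integrable.mono' (integrable_const (2 / ρ)) (dlog_aesm c) ?_
    filter_upwards [haeK hsupp] with w hw
    have hcw0 : c ≠ w := fun h => hcK (h ▸ hw)
    refine (dlog_norm_le w c hcw0).trans ?_
    rw [div_le_div_iff₀ (lt_of_lt_of_le hρ (hfar w hw)) hρ]
    nlinarith [hfar w hw]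
  set e : ℂ := ⟨-f 1, -f Complex.I⟩ with hedef
  have hrepr : ∀ z : ℂ, f z = z.re * f 1 + z.im * f Complex.I := by
    intro z
    have hz : z = z.re • (1 : ℂ) + z.im • Complex.I := by
      rw [Complex.real_smul, Complex.real_smul, mul_one]
      exact (Complex.re_add_im z).symm
    calc f z = f (z.re • (1 : ℂ) + z.im • Complex.I) := by rw [← hz]
    _ = z.re * f 1 + z.im * f Complex.I := by
        rw [map_add, f.map_smul, f.map_smul, smul_eq_mul, smul_eq_mul]
  set β := u - f c with hβdef
  have hβ : 0 < β := by rw [hβdef]; linarith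
  have hptw : ∀ᵐ w ∂ω, (M ^ 2)⁻¹ * β ≤ dlog w c e := by
    filter_upwards [haeK hsupp] with w hw
    rw [dlog_apply]
    have hnum : (c - w).re * e.re + (c - w).im * e.im = f w - f c := by
      have : e.re = -f 1 := rfl
      have h2 : e.im = -f Complex.I := rfl
      rw [this, h2]
      have h3 := hrepr (c - w)
      rw [map_sub] at h3
      have h4 : (c - w).re * f 1 + (c - w).im * f Complex.I = f c - f w := h3.symm
      linarith [h4]
    rw [hnum]
    have hfw : u < f w := hfb w (subset_convexHull ℝ K hw)
    have hcw : c ≠ w := fun h => hcK (h ▸ hw)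
    have hnsq_pos : 0 < Complex.normSq (c - w) :=
      Complex.normSq_pos.2 (sub_ne_zero.2 hcw)
    have hnsq_le : Complex.normSq (c - w) ≤ M ^ 2 := by
      rw [← Complex.sq_norm]
      exact pow_le_pow_left₀ (norm_nonneg _) (habsM w hw) 2
    have hinv : (M ^ 2)⁻¹ ≤ (Complex.normSq (c - w))⁻¹ :=
      inv_anti₀ hnsq_pos hnsq_le
    have hβle : β ≤ f w - f c := by rw [hβdef]; linarith
    exact mul_le_mul hinv hβle hβ.le (inv_nonneg.2 hnsq_pos.le)
  have heval : (∫ w, dlog w c ∂ω) e = ∫ w, dlog w c e ∂ω := ContinuousLinearMap.integral_apply hDint e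
  have hpos : (M ^ 2)⁻¹ * β ≤ ∫ w, dlog w c e ∂ω := by
    have hconst : ∫ _ : ℂ, (M ^ 2)⁻¹ * β ∂ω = (M ^ 2)⁻¹ * β := by
      rw [integral_const]; simp
    rw [← hconst]
    exact integral_mono_ae (integrable_const _) (hDint.apply_continuousLinearMap e) hptw
  rw [← heval, hD0] at hpos
  simp only [ContinuousLinearMap.zero_apply] at hpos
  have : 0 < (M ^ 2)⁻¹ * β := by positivity
  linarith

set_option maxHeartbeats 2000000 in
lemma potential_ae_eq (K : Set ℂ) (hK : IsCompact K) (ω : Measure ℂ)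
    [IsProbabilityMeasure ω] (hsupp : ω Kᶜ = 0)
    (hmax : ∀ μ : Measure ℂ, IsProbabilityMeasure μ → suppIn μ K → energy μ ≤ energy ω)
    (hm0int : Integrable kP (ω.prod ω))
    (hdiag : (ω.prod ω) {p : ℂ × ℂ | p.1 = p.2} = 0) :
    ∀ᵐ z ∂ω, (∫ w, Real.log (‖z - w‖) ∂ω)
      = ∫ z', ∫ w, Real.log (‖z' - w‖) ∂ω ∂ω := by
  set p : ℂ → ℝ := fun z => ∫ w, Real.log (‖z - w‖) ∂ω with hp
  set CI : ℝ := ∫ z', ∫ w, Real.log (‖z' - w‖) ∂ω ∂ω with hCIdef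
  have hCI : CI = ∫ q, kP q ∂(ω.prod ω) := integral_integral hm0int
  have hpsm : StronglyMeasurable p := kP_sm.integral_prod_right'
  have hpint : Integrable p ω := hm0int.integral_prod_left
  have henergyω : energy ω = ((CI : ℝ) : EReal) := by
    rw [energy_eq_integral ω hdiag hm0int, hCI]
  -- main step : for every ε > 0, the set {z | CI + ε ≤ p z} is null
  have key : ∀ ε : ℝ, 0 < ε → ω {z | CI + ε ≤ p z} = 0 := by
    intro ε hε
    by_contra hA
    set A := {z | CI + ε ≤ p z} with hAdef
    have hAm : MeasurableSet A := measurableSet_le measurable_const hpsm.measurable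
    set a := ω A with ha
    have ha0 : a ≠ 0 := hA
    have hatop : a ≠ ⊤ := (measure_lt_top ω A).ne
    have hainv : a⁻¹ ≠ ⊤ := ENNReal.inv_ne_top.2 ha0
    set σ : Measure ℂ := a⁻¹ • ω.restrict A with hσdef
    haveI hσprob : IsProbabilityMeasure σ := by
      constructor
      rw [hσdef, Measure.smul_apply, Measure.restrict_apply_univ, smul_eq_mul,
        ENNReal.inv_mul_cancel ha0 hatop]
    -- product identities
    have hres1 : (ω.restrict A).prod ω = (ω.prod ω).restrict (A ×ˢ univ) := by
      have := Measure.prod_restrict (μ := ω) (ν := ω) A univ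
      rwa [Measure.restrict_univ] at this
    have hres2 : ω.prod (ω.restrict A) = (ω.prod ω).restrict (univ ×ˢ A) := by
      have := Measure.prod_restrict (μ := ω) (ν := ω) univ A
      rwa [Measure.restrict_univ] at this
    have hres3 : (ω.restrict A).prod (ω.restrict A) = (ω.prod ω).restrict (A ×ˢ A) :=
      Measure.prod_restrict A A
    have hσω : σ.prod ω = a⁻¹ • ((ω.prod ω).restrict (A ×ˢ univ)) := by
      rw [hσdef, prod_smul_left _ hainv, hres1]
    have hωσ : ω.prod σ = a⁻¹ • ((ω.prod ω).restrict (univ ×ˢ A)) := by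
      rw [hσdef, prod_smul_right _ hainv, hres2]
    have hσσ : σ.prod σ = (a⁻¹ * a⁻¹) • ((ω.prod ω).restrict (A ×ˢ A)) := by
      rw [hσdef, prod_smul_left _ hainv, prod_smul_right _ hainv, hres3, smul_smul]
    -- integrabilities
    have hkσω : Integrable kP (σ.prod ω) := by
      rw [hσω]; exact (hm0int.restrict).smul_measure hainv
    have hkωσ : Integrable kP (ω.prod σ) := by
      rw [hωσ]; exact (hm0int.restrict).smul_measure hainv
    have hkσσ : Integrable kP (σ.prod σ) := by
      rw [hσσ]; exact (hm0int.restrict).smul_measure (ENNReal.mul_ne_top hainv hainv)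
    -- diagonal nullity for components
    have hdσω : (σ.prod ω) {q : ℂ × ℂ | q.1 = q.2} = 0 := by
      rw [hσω, Measure.smul_apply, Measure.restrict_apply diag_meas, smul_eq_mul]
      rw [measure_mono_null inter_subset_left hdiag, mul_zero]
    have hdωσ : (ω.prod σ) {q : ℂ × ℂ | q.1 = q.2} = 0 := by
      rw [hωσ, Measure.smul_apply, Measure.restrict_apply diag_meas, smul_eq_mul]
      rw [measure_mono_null inter_subset_left hdiag, mul_zero]
    have hdσσ : (σ.prod σ) {q : ℂ × ℂ | q.1 = q.2} = 0 := by
      rw [hσσ, Measure.smul_apply, Measure.restrict_apply diag_meas, smul_eq_mul]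
      rw [measure_mono_null inter_subset_left hdiag, mul_zero]
    -- the three energies
    set Eσω : ℝ := ∫ q, kP q ∂(σ.prod ω) with hEσωdef
    set Eωσ : ℝ := ∫ q, kP q ∂(ω.prod σ) with hEωσdef
    set Eσσ : ℝ := ∫ q, kP q ∂(σ.prod σ) with hEσσdef
    have hatr : (a⁻¹).toReal * a.toReal = 1 := by
      rw [ENNReal.toReal_inv]
      exact inv_mul_cancel₀ (ENNReal.toReal_ne_zero.2 ⟨ha0, hatop⟩)
    have hatr0 : 0 < a.toReal := ENNReal.toReal_pos ha0 hatop
    -- Eσω ≥ CI + ε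
    have hEσω_ge : CI + ε ≤ Eσω := by
      have hkresA : Integrable kP ((ω.restrict A).prod ω) := by
        rw [hres1]; exact hm0int.restrict
      have h1 : Eσω = (a⁻¹).toReal * ∫ z in A, p z ∂ω := by
        have hiter : ∫ q, kP q ∂((ω.restrict A).prod ω) = ∫ z in A, p z ∂ω := by
          simp only [hp]
          exact (integral_integral (μ := ω.restrict A) (ν := ω) (f := fun z w => Real.log (‖z - w‖)) (by exact hkresA)).symm
        rw [hEσωdef, hσω, integral_smul_measure, smul_eq_mul, ← hres1, hiter]
      have h2 : (CI + ε) * a.toReal ≤ ∫ z in A, p z ∂ω := by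
        have hconst : ∫ z in A, (CI + ε) ∂ω = (CI + ε) * a.toReal := by
          rw [setIntegral_const, smul_eq_mul, mul_comm]; rfl
        rw [← hconst]
        refine setIntegral_mono_on (integrableOn_const (measure_lt_top ω A).ne)
          (hpint.integrableOn) hAm (fun z hz => hz)
      calc CI + ε = (a⁻¹).toReal * ((CI + ε) * a.toReal) := by
            rw [← mul_assoc, mul_comm (a⁻¹).toReal, mul_assoc, hatr, mul_one]
      _ ≤ (a⁻¹).toReal * ∫ z in A, p z ∂ω := by
            refine mul_le_mul_of_nonneg_left h2 ENNReal.toReal_nonneg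
      _ = Eσω := h1.symm
    -- symmetry
    have hswapkernel : ∀ q : ℂ × ℂ, kP (Prod.swap q) = kP q := by
      intro q
      show Real.log (‖q.2 - q.1‖) = Real.log (‖q.1 - q.2‖)
      rw [norm_sub_rev]
    have hswap : Eωσ = Eσω := by
      rw [hEωσdef, hEσωdef, ← Measure.prod_swap]
      rw [integral_map measurable_swap.aemeasurable kP_sm.aestronglyMeasurable]
      exact integral_congr_ae (Filter.Eventually.of_forall hswapkernel)
    -- choice of t
    set B : ℝ := max (CI - Eσσ) 0 with hBdef
    have hB0 : 0 ≤ B := le_max_right _ _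
    set t : ℝ := ε / (2 * (ε + B + 1)) with htdef
    have hden : 0 < 2 * (ε + B + 1) := by linarith
    have ht0 : 0 < t := div_pos hε hden
    have ht2 : t ≤ 1 / 2 := by
      rw [htdef, div_le_div_iff₀ hden (by norm_num)]
      linarith
    have htB : t * B < ε := by
      rcases eq_or_lt_of_le hB0 with hB | hB
      · rw [← hB, mul_zero]; exact hε
      · rw [htdef]
        calc ε / (2 * (ε + B + 1)) * B = ε * (B / (2 * (ε + B + 1))) := by ring
        _ < ε * 1 := by
            refine mul_lt_mul_of_pos_left ((div_lt_one hden).2 (by linarith)) hε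
        _ = ε := mul_one ε
    set r1 : ℝ≥0∞ := ENNReal.ofReal (1 - t) with hr1def
    set r2 : ℝ≥0∞ := ENNReal.ofReal t with hr2def
    have hr1top : r1 ≠ ⊤ := ENNReal.ofReal_ne_top
    have hr2top : r2 ≠ ⊤ := ENNReal.ofReal_ne_top
    set μt : Measure ℂ := r1 • ω + r2 • σ with hμtdef
    haveI hμtprob : IsProbabilityMeasure μt := by
      constructor
      rw [hμtdef, Measure.add_apply, Measure.smul_apply, Measure.smul_apply,
        measure_univ, measure_univ, smul_eq_mul, smul_eq_mul, mul_one, mul_one,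
        hr1def, hr2def, ← ENNReal.ofReal_add (by linarith) ht0.le]
      norm_num
    have hsuppμt : suppIn μt K := by
      refine ⟨K, hK, subset_rfl, ?_⟩
      have hσK : σ Kᶜ = 0 := by
        rw [hσdef, Measure.smul_apply, Measure.restrict_apply hK.isClosed.measurableSet.compl,
          measure_mono_null inter_subset_left hsupp, smul_zero]
      rw [hμtdef, Measure.add_apply, Measure.smul_apply, Measure.smul_apply, hsupp, hσK,
        smul_zero, smul_zero, add_zero]
    -- product decomposition
    have e2 : (r1 • ω).prod μt = r1 • ((r1 • (ω.prod ω)) + (r2 • (ω.prod σ))) := by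
      rw [prod_smul_left _ hr1top, hμtdef, Measure.prod_add, prod_smul_right _ hr1top,
        prod_smul_right _ hr2top]
    have e3 : (r2 • σ).prod μt = r2 • ((r1 • (σ.prod ω)) + (r2 • (σ.prod σ))) := by
      rw [prod_smul_left _ hr2top, hμtdef, Measure.prod_add, prod_smul_right _ hr1top,
        prod_smul_right _ hr2top]
    have hprodt : μt.prod μt = ((r1 * r1) • (ω.prod ω) + (r1 * r2) • (ω.prod σ))
        + ((r2 * r1) • (σ.prod ω) + (r2 * r2) • (σ.prod σ)) := by
      rw [hμtdef, Measure.add_prod, ← hμtdef, e2, e3, smul_add, smul_add,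
        smul_smul, smul_smul, smul_smul, smul_smul]
    -- integrability over μt.prod μt
    have hI1 : Integrable kP ((r1 * r1) • (ω.prod ω) : Measure (ℂ × ℂ)) :=
      hm0int.smul_measure (ENNReal.mul_ne_top hr1top hr1top)
    have hI2 : Integrable kP ((r1 * r2) • (ω.prod σ) : Measure (ℂ × ℂ)) :=
      hkωσ.smul_measure (ENNReal.mul_ne_top hr1top hr2top)
    have hI3 : Integrable kP ((r2 * r1) • (σ.prod ω) : Measure (ℂ × ℂ)) :=
      hkσω.smul_measure (ENNReal.mul_ne_top hr2top hr1top)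
    have hI4 : Integrable kP ((r2 * r2) • (σ.prod σ) : Measure (ℂ × ℂ)) :=
      hkσσ.smul_measure (ENNReal.mul_ne_top hr2top hr2top)
    have hintt : Integrable kP (μt.prod μt) := by
      rw [hprodt]
      exact (hI1.add_measure hI2).add_measure (hI3.add_measure hI4)
    have hdiagt : (μt.prod μt) {q : ℂ × ℂ | q.1 = q.2} = 0 := by
      rw [hprodt, Measure.add_apply, Measure.add_apply, Measure.add_apply,
        Measure.smul_apply, Measure.smul_apply, Measure.smul_apply, Measure.smul_apply,
        hdiag, hdωσ, hdσω, hdσσ]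
      simp
    -- value of the energy of μt
    have htr1 : (r1 * r1).toReal = (1 - t) * (1 - t) := by
      rw [ENNReal.toReal_mul, hr1def, ENNReal.toReal_ofReal (by linarith)]
    have htr2 : (r1 * r2).toReal = (1 - t) * t := by
      rw [ENNReal.toReal_mul, hr1def, hr2def, ENNReal.toReal_ofReal (by linarith),
        ENNReal.toReal_ofReal ht0.le]
    have htr3 : (r2 * r1).toReal = t * (1 - t) := by
      rw [ENNReal.toReal_mul, hr1def, hr2def, ENNReal.toReal_ofReal ht0.le,
        ENNReal.toReal_ofReal (by linarith)]
    have htr4 : (r2 * r2).toReal = t * t := by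
      rw [ENNReal.toReal_mul, hr2def, ENNReal.toReal_ofReal ht0.le]
    have hEt : ∫ q, kP q ∂(μt.prod μt)
        = (1 - t) * (1 - t) * CI + (1 - t) * t * Eωσ + (t * (1 - t) * Eσω + t * t * Eσσ) := by
      rw [hprodt, integral_add_measure (hI1.add_measure hI2) (hI3.add_measure hI4),
        integral_add_measure hI1 hI2, integral_add_measure hI3 hI4,
        integral_smul_measure, integral_smul_measure, integral_smul_measure,
        integral_smul_measure, htr1, htr2, htr3, htr4, hCI]
      simp only [smul_eq_mul]
      rfl
    -- apply maximality
    have hle : (∫ q, kP q ∂(μt.prod μt)) ≤ CI := by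
      have := hmax μt hμtprob hsuppμt
      rw [energy_eq_integral μt hdiagt hintt, henergyω] at this
      exact_mod_cast this
    -- contradiction
    have hcontr : CI < ∫ q, kP q ∂(μt.prod μt) := by
      rw [hEt, hswap]
      have hBge : CI - Eσσ ≤ B := le_max_left _ _
      nlinarith [mul_le_mul_of_nonneg_left hEσω_ge
          (show (0:ℝ) ≤ (1 - t) * t by nlinarith),
        mul_le_mul_of_nonneg_left hEσω_ge (show (0:ℝ) ≤ t * (1 - t) by nlinarith),
        mul_pos ht0 (show 0 < 2 * (1 - t) * ε - t * (CI - Eσσ) by nlinarith)]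
    exact absurd hle (not_le.2 hcontr)
  -- from key : p ≤ CI a.e.
  have hple : ∀ᵐ z ∂ω, p z ≤ CI := by
    rw [ae_iff]
    refine measure_mono_null (fun z hz => ?_)
      (measure_iUnion_null fun n : ℕ => key (1 / (n + 1)) (by positivity))
    simp only [Set.mem_setOf_eq, not_le] at hz
    obtain ⟨n, hn⟩ := exists_nat_one_div_lt (show 0 < p z - CI by linarith)
    refine Set.mem_iUnion.2 ⟨n, ?_⟩
    simp only [Set.mem_setOf_eq]
    push_cast
    push_cast at hn
    linarith
  -- conclude equality a.e.
  have hnonneg : 0 ≤ᵐ[ω] fun z => CI - p z := by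
    filter_upwards [hple] with z hz
    simp [hz]
  have hint2 : Integrable (fun z => CI - p z) ω := (integrable_const CI).sub hpint
  have hzero : ∫ z, (CI - p z) ∂ω = 0 := by
    rw [integral_sub (integrable_const CI) hpint, integral_const]
    simp [hCIdef, hp]
  have := (integral_eq_zero_iff_of_nonneg_ae hnonneg hint2).1 hzero
  filter_upwards [this] with z hz
  have : CI - p z = 0 := hz
  linarith [this]

lemma pot_upper (K : Set ℂ) (hK : IsCompact K) (hKne : K.Nonempty) (ω : Measure ℂ)
    [IsProbabilityMeasure ω] (hsupp : ω Kᶜ = 0) {c : ℂ} {R : ℝ} (hcK : c ∉ K)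
    (habs : ‖c‖ ≤ R) (hR : K ⊆ Metric.closedBall 0 R) :
    (∫ w, Real.log (‖c - w‖) ∂ω) ≤ Real.log (2 * R + 1) := by
  have hR0 : 0 ≤ R := by
    obtain ⟨w, hw⟩ := hKne
    have := hR hw
    rw [Metric.mem_closedBall, dist_zero_right] at this
    exact (norm_nonneg w).trans this
  have hconst : ∫ _ : ℂ, Real.log (2 * R + 1) ∂ω = Real.log (2 * R + 1) := by
    rw [integral_const]; simp
  rw [← hconst]
  refine integral_mono_ae (integrable_slice hK hsupp hcK hKne) (integrable_const _) ?_
  filter_upwards [haeK hsupp] with w hw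
  refine log_le_log' (norm_nonneg _) ?_ (by linarith)
  have hw' : ‖w‖ ≤ R := by
    have := hR hw
    rwa [Metric.mem_closedBall, dist_zero_right] at this
  calc ‖c - w‖ = ‖c - w‖ := rfl
  _ ≤ ‖c‖ + ‖w‖ := norm_sub_le _ _
  _ ≤ 2 * R + 1 := by
      have : ‖c‖ ≤ R := by exact habs
      linarith

lemma pot_lower (K : Set ℂ) (hK : IsCompact K) (hKne : K.Nonempty) (ω : Measure ℂ)
    [IsProbabilityMeasure ω] (hsupp : ω Kᶜ = 0) {c : ℂ} (hcK : c ∉ K)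
    (hnoatom : ∀ x : ℂ, ω {x} = 0)
    (hm0int : Integrable (fun p : ℂ × ℂ => Real.log (‖p.1 - p.2‖)) (ω.prod ω))
    (hpae : ∀ᵐ z ∂ω, (∫ w, Real.log (‖z - w‖) ∂ω)
      = ∫ z', ∫ w, Real.log (‖z' - w‖) ∂ω ∂ω) :
    (∫ z', ∫ w, Real.log (‖z' - w‖) ∂ω ∂ω) - Real.log 3
      ≤ ∫ w, Real.log (‖c - w‖) ∂ω := by
  set CI : ℝ := ∫ z', ∫ w, Real.log (‖z' - w‖) ∂ω ∂ω with hCIdef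
  obtain ⟨R, hR⟩ := hK.isBounded.subset_closedBall 0
  set ρ := Metric.infDist c K with hρdef
  have hρ : 0 < ρ := (hK.isClosed.notMem_iff_infDist_pos hKne).1 hcK
  set T := {r : ℝ | 0 < r ∧ ω (Metric.ball c r) = 0} with hTdef
  have hρT : ρ ∈ T := by
    refine ⟨hρ, ?_⟩
    refine measure_mono_null (fun y hy => ?_) hsupp
    intro hyK
    rw [Metric.mem_ball] at hy
    have := Metric.infDist_le_dist_of_mem (x := c) hyK
    rw [dist_comm] at this
    rw [← hρdef] at this
    linarith
  have hTbdd : BddAbove T := by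
    refine ⟨‖c‖ + |R| + 1, fun r hr => ?_⟩
    by_contra hlt
    push_neg at hlt
    have hKball : K ⊆ Metric.ball c r := by
      intro y hy
      have hy' : ‖y‖ ≤ |R| := by
        have := hR hy
        rw [Metric.mem_closedBall, dist_zero_right] at this
        exact this.trans (le_abs_self R)
      rw [Metric.mem_ball]
      calc dist y c ≤ ‖y‖ + ‖c‖ := by
            rw [dist_eq_norm]; exact norm_sub_le _ _
      _ < r := by
            linarith
    have h1 : ω (Metric.ball c r) = 1 := by
      refine le_antisymm prob_le_one ?_
      have hK1 : ω K = 1 := by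
        have := measure_add_measure_compl (μ := ω) hK.isClosed.measurableSet
        rw [hsupp, add_zero, measure_univ] at this
        exact this
      rw [← hK1]
      exact measure_mono hKball
    rw [hr.2] at h1
    norm_num at h1
  set δ := sSup T with hδdef
  have hδρ : ρ ≤ δ := le_csSup hTbdd hρT
  have hδ : 0 < δ := lt_of_lt_of_le hρ hδρ
  have hTup : ∀ r s : ℝ, r ∈ T → 0 < s → s ≤ r → s ∈ T := by
    intro r s hr hs hsr
    exact ⟨hs, measure_mono_null (Metric.ball_subset_ball hsr) hr.2⟩
  have hnull : ω (Metric.ball c δ) = 0 := by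
    have hsub : Metric.ball c δ ⊆ ⋃ n : ℕ, Metric.ball c (δ - 1 / (n + 1)) := by
      intro x hx
      rw [Metric.mem_ball] at hx
      obtain ⟨n, hn⟩ := exists_nat_one_div_lt (show 0 < δ - dist x c by linarith)
      refine Set.mem_iUnion.2 ⟨n, ?_⟩
      rw [Metric.mem_ball]
      push_cast at hn ⊢
      linarith
    refine measure_mono_null hsub (measure_iUnion_null fun n => ?_)
    rcases le_or_gt (δ - 1 / (n + 1)) 0 with h | h
    · rw [Metric.ball_eq_empty.2 h]
      exact measure_empty
    · obtain ⟨r, hrT, hrgt⟩ := exists_lt_of_lt_csSup ⟨ρ, hρT⟩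
        (show δ - 1 / (n + 1) < δ by
          have : (0:ℝ) < 1 / (n + 1) := by positivity
          linarith)
      exact (hTup r _ hrT h hrgt.le).2
  have hfar : ∀ᵐ u ∂ω, δ ≤ ‖c - u‖ := by
    rw [ae_iff]
    refine measure_mono_null (fun u hu => ?_) hnull
    simp only [Set.mem_setOf_eq, not_le] at hu
    rw [Metric.mem_ball, Complex.dist_eq, norm_sub_rev]
    exact hu
  have hpos2 : ω (Metric.ball c (2 * δ)) ≠ 0 := by
    intro h0
    have : 2 * δ ∈ T := ⟨by linarith, h0⟩
    have := le_csSup hTbdd this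
    linarith
  -- pick a good point w near c
  have hwex : ∃ w, w ∈ Metric.ball c (2 * δ)
      ∧ (∫ u, Real.log (‖w - u‖) ∂ω) = CI
      ∧ Integrable (fun u => Real.log (‖w - u‖)) ω := by
    by_contra hno
    push_neg at hno
    apply hpos2
    have hsub : Metric.ball c (2 * δ) ⊆
        {z : ℂ | ¬ ((∫ u, Real.log (‖z - u‖) ∂ω) = CI
          ∧ Integrable (fun u => Real.log (‖z - u‖)) ω)} := by
      intro z hz
      intro hcontr
      exact absurd hcontr.2 (fun h2 => (hno z hz hcontr.1) h2)
    refine measure_mono_null hsub ?_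
    have h1 : ∀ᵐ z ∂ω, ((∫ u, Real.log (‖z - u‖) ∂ω) = CI
        ∧ Integrable (fun u => Real.log (‖z - u‖)) ω) :=
      hpae.and hm0int.prod_right_ae
    rw [ae_iff] at h1
    exact h1
  obtain ⟨w, hwball, hpw, hwint⟩ := hwex
  have hwc : ‖w - c‖ < 2 * δ := by
    rw [Metric.mem_ball, Complex.dist_eq] at hwball
    exact hwball
  have haeuw : ∀ᵐ u ∂ω, u ≠ w := by
    rw [ae_iff]
    refine measure_mono_null (fun u hu => ?_) (hnoatom w)
    simp only [Set.mem_setOf_eq, not_not] at hu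
    exact hu
  have hptw : ∀ᵐ u ∂ω, - Real.log 3
      ≤ Real.log (‖c - u‖) - Real.log (‖w - u‖) := by
    filter_upwards [hfar, haeuw] with u hufar huw
    have hcu : 0 < ‖c - u‖ := lt_of_lt_of_le hδ hufar
    have hwu : 0 < ‖w - u‖ :=
      norm_pos_iff.2 (sub_ne_zero.2 (fun h => huw (by rw [← h]) ))
    have hwu_le : ‖w - u‖ ≤ 3 * ‖c - u‖ := by
      have h1 : ‖w - u‖ ≤ ‖w - c‖ + ‖c - u‖ := by
        have := norm_add_le (w - c) (c - u)
        rwa [sub_add_sub_cancel] at this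
      linarith
    have hlog : Real.log (‖c - u‖) - Real.log (‖w - u‖)
        = Real.log (‖c - u‖ / ‖w - u‖) :=
      (Real.log_div hcu.ne' hwu.ne').symm
    rw [hlog]
    have hratio : (3:ℝ)⁻¹ ≤ ‖c - u‖ / ‖w - u‖ := by
      rw [le_div_iff₀ hwu]
      linarith
    calc - Real.log 3 = Real.log (3:ℝ)⁻¹ := (Real.log_inv 3).symm
    _ ≤ Real.log (‖c - u‖ / ‖w - u‖) :=
        Real.log_le_log (by norm_num) hratio
  have hint_c : Integrable (fun u => Real.log (‖c - u‖)) ω :=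
    integrable_slice hK hsupp hcK hKne
  have hdiff : ∫ u, (Real.log (‖c - u‖) - Real.log (‖w - u‖)) ∂ω
      = (∫ u, Real.log (‖c - u‖) ∂ω) - ∫ u, Real.log (‖w - u‖) ∂ω :=
    integral_sub hint_c hwint
  have hmono : - Real.log 3
      ≤ ∫ u, (Real.log (‖c - u‖) - Real.log (‖w - u‖)) ∂ω := by
    have hconst : ∫ _ : ℂ, (- Real.log 3) ∂ω = - Real.log 3 := by
      rw [integral_const]; simp
    rw [← hconst]
    exact integral_mono_ae (integrable_const _) (hint_c.sub hwint) hptw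
  rw [hdiff, hpw] at hmono
  linarith

end CPaux

/-- Every critical point of the Green's function g = p_ω − I(ω) of the unbounded complementary
component of a compact non-polar set K lies in the convex hull of K; consequently the set of
singular values of g is bounded. -/
theorem critical_points_in_convex_hull (K : Set ℂ) (hK : IsCompact K) (ω : Measure ℂ)
    (hprob : IsProbabilityMeasure ω) (hsupp : ω Kᶜ = 0)
    (hmax : ∀ μ : Measure ℂ, IsProbabilityMeasure μ → suppIn μ K → energy μ ≤ energy ω)
    (hnp : energy ω ≠ ⊥)
    (g : ℂ → ℝ)
    (hg : ∀ z : ℂ, g z = (∫ w, Real.log (‖z - w‖) ∂ω)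
        - ∫ z', ∫ w, Real.log (‖z' - w‖) ∂ω ∂ω) :
    (∀ c ∈ finPart (unbDom K), fderiv ℝ g c = 0 → c ∈ convexHull ℝ K) ∧
    Bornology.IsBounded
      (insert (0:ℝ) {v : ℝ | ∃ c ∈ finPart (unbDom K), fderiv ℝ g c = 0 ∧ v = g c}) := by
  haveI := hprob
  have hKne : K.Nonempty := by
    by_contra h
    rw [Set.not_nonempty_iff_eq_empty] at h
    rw [h, Set.compl_empty, measure_univ] at hsupp
    norm_num at hsupp
  have hm0int : Integrable CPaux.kP (ω.prod ω) := CPaux.kint hK hsupp hnp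
  have hdiag := CPaux.diag0 (ω := ω) hnp
  have hnoatom := CPaux.noatom (ω := ω) hnp
  have hpae := CPaux.potential_ae_eq K hK ω hsupp hmax hm0int hdiag
  set CI : ℝ := ∫ z', ∫ w, Real.log (‖z' - w‖) ∂ω ∂ω with hCIdef
  have hg' : ∀ z, g z = (∫ w, Real.log (‖z - w‖) ∂ω) - CI := hg
  have hnotK : ∀ c ∈ finPart (unbDom K), c ∉ K := by
    intro c hcD hcKmem
    have h1 : (c : OnePoint ℂ) ∈ ((fun z : ℂ => (z : OnePoint ℂ)) '' K)ᶜ :=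
      connectedComponentIn_subset _ _ hcD
    exact h1 ⟨c, hcKmem, rfl⟩
  have hpart1 : ∀ c ∈ finPart (unbDom K), fderiv ℝ g c = 0 → c ∈ convexHull ℝ K := by
    intro c hcD hcrit
    exact CPaux.crit_mem_hull K hK hKne ω hsupp CI g hg' (hnotK c hcD) hcrit
  refine ⟨hpart1, ?_⟩
  obtain ⟨R, hR⟩ := hK.isBounded.subset_closedBall 0
  have hRabs : K ⊆ Metric.closedBall 0 |R| :=
    hR.trans (Metric.closedBall_subset_closedBall (le_abs_self R))
  refine (Metric.isBounded_Icc (min (- Real.log 3) 0)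
    (max (Real.log (2 * |R| + 1) - CI) 0)).subset ?_
  intro v hv
  rcases Set.mem_insert_iff.1 hv with rfl | ⟨c, hcD, hcrit, rfl⟩
  · exact ⟨min_le_right _ _, le_max_right _ _⟩
  · have hcK : c ∉ K := hnotK c hcD
    have hhull : c ∈ convexHull ℝ K := hpart1 c hcD hcrit
    have habs : ‖c‖ ≤ |R| := by
      have h1 : c ∈ Metric.closedBall (0:ℂ) |R| :=
        convexHull_min hRabs (convex_closedBall _ _) hhull
      rw [Metric.mem_closedBall, dist_zero_right] at h1
      exact h1
    have hupper := CPaux.pot_upper K hK hKne ω hsupp hcK habs hRabs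
    have hlower := CPaux.pot_lower K hK hKne ω hsupp hcK hnoatom hm0int hpae
    rw [hg' c]
    constructor
    · have h2 : - Real.log 3 ≤ (∫ w, Real.log (‖c - w‖) ∂ω) - CI := by
        linarith
      exact le_trans (min_le_left _ _) h2
    · have h2 : (∫ w, Real.log (‖c - w‖) ∂ω) - CI
          ≤ Real.log (2 * |R| + 1) - CI := by linarith
      exact le_trans h2 (le_max_left _ _)
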